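/- Let f be meromorphic near z₀ with a pole of order t ≥ 1, let q₀ ≥ 2, q_k ≥ 1, k ≥ 1, and set g = f^{q₀}(f^{(k)})^{q_k} − 1 and β = q₀ f' (f^{(k)})^{q_k} + q_k f (f^{(k)})^{q_k−1} f^{(k+1)} − f (f^{(k)})^{q_k} (g'/g). Then f^{q₀−1} β = −g'/g; in particular, if t ≥ 2 then z₀ is a zero of β of order (q₀−1)t − 1. -/

import Mathlib

open MeasureTheory Filter intervalIntegral

/-- log⁺ x = max 0 (log x). -/
noncomputable def logPlus (x : ℝ) : ℝ := max 0 (Real.log x)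

/-- Nevanlinna proximity function m(r, f). -/
noncomputable def nevProx (f : ℂ → ℂ) (r : ℝ) : ℝ :=
  (2 * Real.pi)⁻¹ * ∫ θ in (0 : ℝ)..(2 * Real.pi),
    logPlus ‖f (r * Complex.exp (θ * Complex.I))‖

/-- The order of `f` at `z` as a meromorphic function (junk value `0` if not meromorphic). -/
noncomputable def morder (f : ℂ → ℂ) (z : ℂ) : WithTop ℤ := by
  classical exact if h : MeromorphicAt f z then meromorphicOrderAt f z else 0

/-- Pole multiplicity of `f` at `z`, truncated at level `m` (`m = 0` means no truncation). -/
noncomputable def poleMult (f : ℂ → ℂ) (m : ℕ) (z : ℂ) : ℕ :=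
  if m = 0 then (-(morder f z).untopD 0).toNat
  else min m (-(morder f z).untopD 0).toNat

/-- Unintegrated counting function n(t, f) of poles, truncated at level `m`. -/
noncomputable def nevSmallN (f : ℂ → ℂ) (m : ℕ) (t : ℝ) : ℝ :=
  ∑' z : ℂ, if ‖z‖ ≤ t then (poleMult f m z : ℝ) else 0

/-- Integrated counting function N(r, f) of poles, truncated at level `m`
(`m = 0`: with multiplicity, `m = 1`: reduced). -/
noncomputable def nevCountN (f : ℂ → ℂ) (m : ℕ) (r : ℝ) : ℝ :=
  (∫ t in (0 : ℝ)..r, (nevSmallN f m t - nevSmallN f m 0) / t) +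
    nevSmallN f m 0 * Real.log r

/-- Nevanlinna characteristic function T(r, f). -/
noncomputable def nevT (f : ℂ → ℂ) (r : ℝ) : ℝ := nevProx f r + nevCountN f 0 r

/-- `f` is a transcendental meromorphic function on ℂ. -/
def TranscendentalMeromorphic (f : ℂ → ℂ) : Prop :=
  MeromorphicOn f Set.univ ∧
    ¬ ∃ p q : Polynomial ℂ, q ≠ 0 ∧ ∀ᶠ z in Filter.cofinite, f z = p.eval z / q.eval z

/-- `S` is an `S(r, f)`-type error term: `S(r) = o(T(r, f))` as `r → ∞` outside a set
`E` of finite linear measure. -/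
def IsSrf (S : ℝ → ℝ) (f : ℂ → ℂ) : Prop :=
  ∃ E : Set ℝ, volume E ≠ ⊤ ∧ S =o[atTop ⊓ Filter.principal Eᶜ] nevT f

/-- `a` is a small function with respect to `f`. -/
def SmallFunctionOf (a f : ℂ → ℂ) : Prop :=
  MeromorphicOn a Set.univ ∧ (¬ ∀ᶠ z in Filter.cofinite, a z = 0) ∧ IsSrf (nevT a) f

/-! Write `G = f ^ q₀ * (f⁽ᵏ⁾) ^ qₖ`, so that `g = G - 1` and `g' = G'`. Multiplying the first two
terms of `β` by `f ^ (q₀ - 1)` gives exactly `G'`, and the last one gives `G * g' / g`; hence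
`f ^ (q₀ - 1) * β = g' - (g + 1) * g' / g = -g' / g`. For the order: `f⁽ᵏ⁾` has a pole of order
`t + k`, so `g` has a pole of order `q₀ t + qₖ (t + k)`, its logarithmic derivative has a simple
pole, and dividing by `f ^ (q₀ - 1)` shifts the order by `(q₀ - 1) t`. -/

open Topology

theorem morder_eq_meromorphicOrderAt (f : ℂ → ℂ) (z : ℂ) :
    morder f z = meromorphicOrderAt f z := by
  by_cases hf : MeromorphicAt f z
  · exact dif_pos hf
  · simp [morder, hf]

section

variable {𝕜 E : Type*} [NontriviallyNormedField 𝕜] [NormedAddCommGroup E] [NormedSpace 𝕜 E]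
  {x : 𝕜}

theorem meromorphicOrderAt_iteratedDeriv_of_neg [CharZero 𝕜] [CompleteSpace E] {f : 𝕜 → E}
    {n : ℤ} (hn : n < 0) (hf : meromorphicOrderAt f x = n) (k : ℕ) :
    meromorphicOrderAt (iteratedDeriv k f) x = ↑(n - k) := by
  induction k with
  | zero => simpa using hf
  | succ k ih =>
    rw [iteratedDeriv_succ, meromorphicOrderAt_deriv_eq_sub_one _ ih]
    · congr 1; push_cast; ring
    · exact_mod_cast (by omega : n - k ≠ 0)

theorem meromorphicOrderAt_sub_const_of_neg {f : 𝕜 → E} (hf : meromorphicOrderAt f x < 0)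
    (c : E) : meromorphicOrderAt (fun z ↦ f z - c) x = meromorphicOrderAt f x := by
  simp only [sub_eq_add_neg]
  exact meromorphicOrderAt_add_eq_left_of_lt (MeromorphicAt.const (-c) x)
    (hf.trans_le analyticAt_const.meromorphicOrderAt_nonneg)

theorem meromorphicOrderAt_pow_mul_iteratedDeriv_pow_sub_one [CharZero 𝕜] [CompleteSpace 𝕜]
    {f : 𝕜 → 𝕜} {n : ℤ} (hn : n < 0) (hf : meromorphicOrderAt f x = n) {p : ℕ} (hp : p ≠ 0)
    (q k : ℕ) :
    meromorphicOrderAt (fun z ↦ f z ^ p * iteratedDeriv k f z ^ q - 1) x =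
      ↑(p * n + q * (n - k)) := by
  have hfm : MeromorphicAt f x :=
    meromorphicAt_of_meromorphicOrderAt_ne_zero (by rw [hf]; exact_mod_cast hn.ne)
  have hDm : MeromorphicAt (iteratedDeriv k f) x := by
    rw [iteratedDeriv_eq_iterate]; exact hfm.iterated_deriv
  have hprod : meromorphicOrderAt (fun z ↦ f z ^ p * iteratedDeriv k f z ^ q) x =
      ↑(p * n + q * (n - k)) := by
    change meromorphicOrderAt (f ^ p * iteratedDeriv k f ^ q) x = _
    rw [meromorphicOrderAt_mul (hfm.pow _) (hDm.pow _), meromorphicOrderAt_pow hfm,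
      meromorphicOrderAt_pow hDm, hf, meromorphicOrderAt_iteratedDeriv_of_neg hn hf]
    norm_cast
  have hneg : p * n + q * (n - k) < 0 := by
    have : (p : ℤ) * n < 0 := Int.mul_neg_of_pos_of_neg (by omega) hn
    nlinarith
  rw [meromorphicOrderAt_sub_const_of_neg (by rw [hprod]; exact_mod_cast hneg), hprod]

theorem meromorphicOrderAt_of_pow_mul_eventuallyEq {u v h : 𝕜 → 𝕜} {n ℓ : ℤ}
    (hu : MeromorphicAt u x) (hun : meromorphicOrderAt u x = n) (hh : MeromorphicAt h x)
    (hhℓ : meromorphicOrderAt h x = ℓ) (m : ℕ) (heq : ∀ᶠ z in 𝓝[≠] x, u z ^ m * v z = h z) :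
    meromorphicOrderAt v x = ↑(ℓ - m * n) := by
  have hune : ∀ᶠ z in 𝓝[≠] x, u z ≠ 0 :=
    (meromorphicOrderAt_ne_top_iff_eventually_ne_zero hu).1 (by rw [hun]; exact WithTop.coe_ne_top)
  have hv : v =ᶠ[𝓝[≠] x] h / u ^ m := by
    filter_upwards [heq, hune] with z hz huz
    rw [Pi.div_apply, ← hz, Pi.pow_apply, mul_div_cancel_left₀ _ (pow_ne_zero _ huz)]
  rw [meromorphicOrderAt_congr hv, meromorphicOrderAt_div hh (hu.pow m), meromorphicOrderAt_pow hu,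
    hun, hhℓ]
  norm_cast

end

section

variable {𝕜 : Type*} [NontriviallyNormedField 𝕜]

theorem pow_sub_one_mul_eq_neg_logDeriv {u v : 𝕜 → 𝕜} {z : 𝕜} {p q : ℕ} (hp : p ≠ 0)
    (hu : DifferentiableAt 𝕜 u z) (hv : DifferentiableAt 𝕜 v z)
    (hg : u z ^ p * v z ^ q - 1 ≠ 0) :
    u z ^ (p - 1) * (p * deriv u z * v z ^ q + q * u z * v z ^ (q - 1) * deriv v z -
      u z * v z ^ q * logDeriv (fun w ↦ u w ^ p * v w ^ q - 1) z) =
      -logDeriv (fun w ↦ u w ^ p * v w ^ q - 1) z := by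
  have hderiv : deriv (fun w ↦ u w ^ p * v w ^ q - 1) z =
      u z ^ (p - 1) * (p * deriv u z * v z ^ q + q * u z * v z ^ (q - 1) * deriv v z) := by
    rw [(((hu.hasDerivAt.fun_pow p).fun_mul (hv.hasDerivAt.fun_pow q)).sub_const 1).deriv,
      ← pow_sub_one_mul hp]
    ring
  rw [logDeriv_apply, hderiv, mul_sub]
  generalize u z ^ (p - 1) * (p * deriv u z * v z ^ q + q * u z * v z ^ (q - 1) * deriv v z) = D
  rw [← pow_sub_one_mul hp] at hg ⊢
  field_simp
  ring

theorem AnalyticAt.pow_sub_one_mul_eq_neg_logDeriv [CompleteSpace 𝕜] {f : 𝕜 → 𝕜} {z : 𝕜}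
    (hf : AnalyticAt 𝕜 f z) {p : ℕ} (hp : p ≠ 0) {q k : ℕ}
    (hg : f z ^ p * iteratedDeriv k f z ^ q - 1 ≠ 0) :
    f z ^ (p - 1) * (p * deriv f z * iteratedDeriv k f z ^ q +
      q * f z * iteratedDeriv k f z ^ (q - 1) * iteratedDeriv (k + 1) f z -
      f z * iteratedDeriv k f z ^ q *
        logDeriv (fun w ↦ f w ^ p * iteratedDeriv k f w ^ q - 1) z) =
      -logDeriv (fun w ↦ f w ^ p * iteratedDeriv k f w ^ q - 1) z := by
  have hD : DifferentiableAt 𝕜 (iteratedDeriv k f) z := by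
    rw [iteratedDeriv_eq_iterate]; exact (hf.iterated_deriv k).differentiableAt
  rw [iteratedDeriv_succ]
  exact _root_.pow_sub_one_mul_eq_neg_logDeriv hp hf.differentiableAt hD hg

end

theorem stmt15_general (f : ℂ → ℂ) (z₀ : ℂ)
    (t q₀ qk k : ℕ) (ht : 1 ≤ t) (hq₀ : 2 ≤ q₀)
    (hpole : morder f z₀ = (-(t : ℤ) : ℤ))
    (g β : ℂ → ℂ)
    (hg : ∀ z, g z = (f z) ^ q₀ * (iteratedDeriv k f z) ^ qk - 1)
    (hβ : ∀ z, β z =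
      (q₀ : ℂ) * deriv f z * (iteratedDeriv k f z) ^ qk +
        (qk : ℂ) * f z * (iteratedDeriv k f z) ^ (qk - 1) * iteratedDeriv (k + 1) f z -
        f z * (iteratedDeriv k f z) ^ qk * (deriv g z / g z)) :
    (∀ᶠ z in nhdsWithin z₀ {z₀}ᶜ,
        (f z) ^ (q₀ - 1) * β z = -(deriv g z / g z)) ∧
    (2 ≤ t → morder β z₀ = (((q₀ : ℤ) - 1) * (t : ℤ) - 1 : ℤ)) := by
  rw [morder_eq_meromorphicOrderAt] at hpole
  have hf : MeromorphicAt f z₀ :=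
    meromorphicAt_of_meromorphicOrderAt_ne_zero (by rw [hpole]; norm_cast; omega)
  have hgfun : g = fun z ↦ f z ^ q₀ * iteratedDeriv k f z ^ qk - 1 := funext hg
  have hM : (q₀ : ℤ) * -t + qk * (-t - k) < 0 := by nlinarith
  have hgord : meromorphicOrderAt g z₀ = ↑((q₀ : ℤ) * -t + qk * (-t - k)) := by
    rw [hgfun]
    exact meromorphicOrderAt_pow_mul_iteratedDeriv_pow_sub_one (by omega) hpole (by omega) qk k
  have hg0 : meromorphicOrderAt g z₀ ≠ 0 := by rw [hgord]; exact_mod_cast hM.ne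
  have hgtop : meromorphicOrderAt g z₀ ≠ ⊤ := by rw [hgord]; exact WithTop.coe_ne_top
  have hgm : MeromorphicAt g z₀ := meromorphicAt_of_meromorphicOrderAt_ne_zero hg0
  have hid : ∀ᶠ z in 𝓝[≠] z₀, f z ^ (q₀ - 1) * β z = -logDeriv g z := by
    filter_upwards [(meromorphicOrderAt_ne_top_iff_eventually_ne_zero hgm).1 hgtop,
      hf.eventually_analyticAt] with z hgz hfz
    rw [hgfun] at hgz
    rw [hβ, ← logDeriv_apply, hgfun]
    exact hfz.pow_sub_one_mul_eq_neg_logDeriv (by omega) hgz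
  refine ⟨hid, fun _ ↦ ?_⟩
  have hlog : meromorphicOrderAt (fun z ↦ -logDeriv g z) z₀ = ↑(-1 : ℤ) := by
    rw [← meromorphicOrderAt_fun_neg, meromorphicOrderAt_logDeriv_eq_neg_one hgm hg0 hgtop]
    rfl
  rw [morder_eq_meromorphicOrderAt,
    meromorphicOrderAt_of_pow_mul_eventuallyEq hf hpole hgm.logDeriv.neg hlog _ hid]
  congr 1
  push_cast [Nat.cast_sub (by omega : 1 ≤ q₀)]
  ring

theorem stmt15 (f : ℂ → ℂ) (z₀ : ℂ) (hf : MeromorphicAt f z₀)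
    (t q₀ qk k : ℕ) (ht : 1 ≤ t) (hq₀ : 2 ≤ q₀) (hqk : 1 ≤ qk) (hk : 1 ≤ k)
    (hpole : morder f z₀ = (-(t : ℤ) : ℤ))
    (g β : ℂ → ℂ)
    (hg : ∀ z, g z = (f z) ^ q₀ * (iteratedDeriv k f z) ^ qk - 1)
    (hβ : ∀ z, β z =
      (q₀ : ℂ) * deriv f z * (iteratedDeriv k f z) ^ qk +
        (qk : ℂ) * f z * (iteratedDeriv k f z) ^ (qk - 1) * iteratedDeriv (k + 1) f z -
        f z * (iteratedDeriv k f z) ^ qk * (deriv g z / g z)) :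
    (∀ᶠ z in nhdsWithin z₀ {z₀}ᶜ,
        (f z) ^ (q₀ - 1) * β z = -(deriv g z / g z)) ∧
    (2 ≤ t → morder β z₀ = (((q₀ : ℤ) - 1) * (t : ℤ) - 1 : ℤ)) :=
  stmt15_general f z₀ t q₀ qk k ht hq₀ hpole g β hg hβ
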